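/- For any pointed simplicial set X and n ≥ 0, the homology with coefficients in the sphere spectrum Γ-set 𝔰 satisfies H_n(X, 𝔰) = π^comb_n(X) ∧ 𝔰, i.e., H_n(X, 𝔰)(k₊) = π^comb_n(X) ∧ k₊; in particular H_m(S^n, 𝔰) = {*} for m ≠ n and H_n(S^n, 𝔰) = 𝔰. -/

import Mathlib

/-- A pointed simplicial set, recorded through the data relevant for combinatorial
homotopy: levelwise pointed sets of simplices together with basepoint-preserving face
maps `d n j : X_{n+1} → X_n` (the `j`-th face, meaningful for `j ≤ n + 1`). -/
structure PSS where
  obj : ℕ → Type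
  pt : ∀ n, obj n
  d : ∀ n, ℕ → obj (n + 1) → obj n
  d_pt : ∀ n j, d n j (pt (n + 1)) = pt n

namespace PSS

/-- `x ∈ X_n` is spherical when all its faces are the basepoint; by Yoneda such simplices
are exactly the pointed simplicial maps `Sⁿ → X`. -/
def isSph (X : PSS) : ∀ n, X.obj n → Prop
  | 0 => fun _ => True
  | n + 1 => fun x => ∀ j ≤ n + 1, X.d n j x = X.pt n

/-- The set `Hom_{S*}(Sⁿ, X)` of spherical `n`-simplices. -/
def Sph (X : PSS) (n : ℕ) := {x : X.obj n // X.isSph n x}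

/-- The homotopy relation between spherical `n`-simplices (May, Definition 3.1):
`x R y` iff there is `z ∈ X_{n+1}` with `∂_j z = *` for `j < n`, `∂_n z = x`,
`∂_{n+1} z = y`. -/
def Rel (X : PSS) (n : ℕ) (a b : X.Sph n) : Prop :=
  ∃ z : X.obj (n + 1),
    (∀ j < n, X.d n j z = X.pt n) ∧ X.d n n z = a.1 ∧ X.d n (n + 1) z = b.1

/-- Combinatorial homotopy `π^comb_n(X)`: spherical `n`-simplices modulo the equivalence
relation generated by the homotopy relation `Rel`. -/
def picomb (X : PSS) (n : ℕ) := Quot (X.Rel n)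

/-- The basepoint is spherical. -/
def sphPt (X : PSS) (n : ℕ) : X.Sph n :=
  ⟨X.pt n, by cases n with
    | zero => trivial
    | succ m => exact fun j _ => X.d_pt m j⟩

/-- The basepoint of `π^comb_n(X)`. -/
def picombPt (X : PSS) (n : ℕ) : X.picomb n := Quot.mk _ (X.sphPt n)

end PSS

/-- The relation whose quotient collapses the wedge `A ∨ k₊ ⊆ A × k₊` to a point. -/
def WedgeRel (A : Type) (a0 : A) (k : ℕ) (u v : A × Fin (k + 1)) : Prop :=
  (u.1 = a0 ∨ u.2 = 0) ∧ (v.1 = a0 ∨ v.2 = 0)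

/-- The smash product `A ∧ k₊` of a pointed set `(A, a0)` with the pointed set
`k₊ = {0, 1, …, k}` (basepoint `0`). -/
def Smash (A : Type) (a0 : A) (k : ℕ) := Quot (WedgeRel A a0 k)

/-- The smash product `X ∧ k₊` of a pointed simplicial set with the discrete pointed
set `k₊`; faces act on the `X`-factor only. -/
def PSS.smash (X : PSS) (k : ℕ) : PSS where
  obj n := Smash (X.obj n) (X.pt n) k
  pt n := Quot.mk _ (X.pt n, 0)
  d n j := Quot.map (fun u => (X.d n j u.1, u.2)) (by
    rintro u v ⟨hu, hv⟩
    refine ⟨?_, ?_⟩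
    · rcases hu with h | h
      · exact Or.inl (by dsimp only; rw [h]; exact X.d_pt n j)
      · exact Or.inr h
    · rcases hv with h | h
      · exact Or.inl (by dsimp only; rw [h]; exact X.d_pt n j)
      · exact Or.inr h)
  d_pt n j := by
    show Quot.mk _ (X.d n j (X.pt (n + 1)), (0 : Fin (k + 1))) = Quot.mk _ (X.pt n, 0)
    rw [X.d_pt]

/-- The coface map `δ_j : [q] → [q+1]` (the monotone injection skipping `j`),
with the index `j` clamped into range. -/
def coface (q j : ℕ) : Fin (q + 1) → Fin (q + 2) :=
  Fin.succAbove ⟨min j (q + 1), by omega⟩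

/-- The combinatorial sphere `S^m = Δ[m]/∂Δ[m]`: its nonbasepoint `q`-simplices are the
monotone surjections `[q] → [m]`; faces are precomposition with cofaces, collapsing
non-surjective composites to the basepoint. -/
def SphSS (m : ℕ) : PSS where
  obj q := Option {f : Fin (q + 1) → Fin (m + 1) // Monotone f ∧ Function.Surjective f}
  pt _ := none
  d q j x := x.bind (fun f =>
    if h : Function.Surjective (f.1 ∘ coface q j)
    then some ⟨f.1 ∘ coface q j, f.2.1.comp (Fin.strictMono_succAbove _).monotone, h⟩
    else none)
  d_pt _ _ := rfl

/-!
A spherical simplex of `X ∧ k₊` is `x ∧ i` with `x` spherical or `i = 0`, and a homotopy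
`w ∧ i` with `i ≠ 0` is a homotopy `w` in `X`; hence `[x ∧ i] ↦ [x] ∧ i` is a bijection
`π^comb_n(X ∧ k₊) ≅ π^comb_n(X) ∧ k₊`. For `Sⁿ = Δ[n]/∂Δ[n]` the only spherical `m`-simplex,
`m ≠ n`, is the base point, and in degree `n` there are exactly two, `*` and `id`, which are
not homotopic; so `π^comb_m(Sⁿ)` is a point and `π^comb_n(Sⁿ) ∧ k₊ ≅ k₊`.
-/

namespace Smash

variable {A : Type} {a0 : A} {k : ℕ}

theorem mk_eq_base_iff {a : A} {i : Fin (k + 1)} :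
    Quot.mk (WedgeRel A a0 k) (a, i) = Quot.mk _ (a0, 0) ↔ a = a0 ∨ i = 0 := by
  refine ⟨fun h => ?_, fun h => Quot.sound ⟨h, Or.inl rfl⟩⟩
  -- Lying on the wedge is a property of classes, and the base point lies on it.
  have hwedge := congrArg (Quot.lift (fun u : A × Fin (k + 1) => u.1 = a0 ∨ u.2 = 0)
    fun _ _ ⟨hu, hv⟩ => propext ⟨fun _ => hv, fun _ => hu⟩) h
  exact hwedge.mpr (Or.inl rfl)

instance [Subsingleton A] : Subsingleton (Smash A a0 k) := by
  suffices h : ∀ s : Smash A a0 k, s = Quot.mk _ (a0, 0) from ⟨fun s t => (h s).trans (h t).symm⟩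
  exact Quot.ind fun u => mk_eq_base_iff.2 (Or.inl (Subsingleton.elim _ _))

open Classical in
noncomputable def equivFin (a1 : A) (h1 : a1 ≠ a0) (hA : ∀ a, a = a0 ∨ a = a1) :
    Smash A a0 k ≃ Fin (k + 1) where
  toFun := Quot.lift (fun u => if u.1 = a0 then 0 else u.2) fun u v ⟨hu, hv⟩ => by
    have hzero : ∀ w : A × Fin (k + 1), (w.1 = a0 ∨ w.2 = 0) →
        (if w.1 = a0 then 0 else w.2) = 0 := by
      rintro w (hw | hw) <;> split_ifs <;> simp_all
    rw [hzero u hu, hzero v hv]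
  invFun i := Quot.mk _ (a1, i)
  left_inv := Quot.ind fun ⟨a, i⟩ => by
    rcases hA a with rfl | rfl
    · exact (mk_eq_base_iff.2 (Or.inr (if_pos rfl))).trans (mk_eq_base_iff.2 (Or.inl rfl)).symm
    · exact congrArg (fun i => Quot.mk _ (a, i)) (if_neg h1)
  right_inv i := if_neg h1

end Smash

namespace PSS

variable {X : PSS} {k n : ℕ}

theorem smash_d_mk_eq_pt_iff {j : ℕ} {x : X.obj (n + 1)} {i : Fin (k + 1)} :
    (X.smash k).d n j (Quot.mk _ (x, i)) = (X.smash k).pt n ↔ X.d n j x = X.pt n ∨ i = 0 :=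
  Smash.mk_eq_base_iff

theorem isSph_smash_mk_iff {x : X.obj n} {i : Fin (k + 1)} :
    (X.smash k).isSph n (Quot.mk _ (x, i)) ↔ i = 0 ∨ X.isSph n x := by
  cases n with
  | zero => simp only [isSph, or_true]
  | succ n =>
    simp only [isSph, smash_d_mk_eq_pt_iff]
    exact ⟨fun h => or_iff_not_imp_left.2 fun hi j hj => (h j hj).resolve_right hi,
      fun h j hj => h.elim Or.inr fun hx => Or.inl (hx j hj)⟩

def Sph.smashMk (x : X.Sph n) (i : Fin (k + 1)) : (X.smash k).Sph n :=
  ⟨Quot.mk _ (x.1, i), isSph_smash_mk_iff.2 (Or.inr x.2)⟩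

theorem Rel.smashMk {x y : X.Sph n} (h : X.Rel n x y) (i : Fin (k + 1)) :
    (X.smash k).Rel n (x.smashMk i) (y.smashMk i) := by
  obtain ⟨z, hz, hzx, hzy⟩ := h
  exact ⟨Quot.mk _ (z, i), fun j hj => smash_d_mk_eq_pt_iff.2 (Or.inl (hz j hj)),
    congrArg (fun w => Quot.mk _ (w, i)) hzx, congrArg (fun w => Quot.mk _ (w, i)) hzy⟩

theorem picombPt_eq_mk {x : X.Sph n} (hx : x.1 = X.pt n) : X.picombPt n = Quot.mk _ x :=
  congrArg (Quot.mk _) (Subtype.ext hx.symm)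

theorem subsingleton_picomb (h : ∀ x, X.isSph n x → x = X.pt n) : Subsingleton (X.picomb n) :=
  ⟨Quot.ind fun x => Quot.ind fun y =>
    (picombPt_eq_mk (h x.1 x.2)).symm.trans (picombPt_eq_mk (h y.1 y.2))⟩

theorem mk_injective_of_rel_eq (h : ∀ x y, X.Rel n x y → x = y) :
    Function.Injective (Quot.mk (X.Rel n)) :=
  fun _ _ hxy => congrArg (Quot.lift id h) hxy

open Classical in
/-- A non-spherical `x` only occurs in a spherical simplex `x ∧ i` of `X ∧ k₊` with `i = 0`,
so sending it to the base point is harmless. -/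
noncomputable def sphClassOrBase (X : PSS) (k n : ℕ) (u : X.obj n × Fin (k + 1)) :
    Smash (X.picomb n) (X.picombPt n) k :=
  if h : X.isSph n u.1 then Quot.mk _ (Quot.mk _ ⟨u.1, h⟩, u.2) else Quot.mk _ (X.picombPt n, 0)

theorem sphClassOrBase_of_isSph {x : X.obj n} (hx : X.isSph n x) (i : Fin (k + 1)) :
    sphClassOrBase X k n (x, i) = Quot.mk _ (Quot.mk _ ⟨x, hx⟩, i) :=
  dif_pos hx

theorem sphClassOrBase_of_wedge {u : X.obj n × Fin (k + 1)} (hu : u.1 = X.pt n ∨ u.2 = 0) :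
    sphClassOrBase X k n u = Quot.mk _ (X.picombPt n, 0) := by
  by_cases hx : X.isSph n u.1
  · exact (dif_pos hx).trans
      (Smash.mk_eq_base_iff.2 (hu.imp_left fun hu => (picombPt_eq_mk hu).symm))
  · exact dif_neg hx

noncomputable def smashSphClass (X : PSS) (k n : ℕ) :
    Smash (X.obj n) (X.pt n) k → Smash (X.picomb n) (X.picombPt n) k :=
  Quot.lift (sphClassOrBase X k n) fun _ _ ⟨hu, hv⟩ =>
    (sphClassOrBase_of_wedge hu).trans (sphClassOrBase_of_wedge hv).symm

theorem smashSphClass_eq_of_rel {a b : (X.smash k).Sph n} (h : (X.smash k).Rel n a b) :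
    smashSphClass X k n a.1 = smashSphClass X k n b.1 := by
  obtain ⟨z, hz, hza, hzb⟩ := h
  obtain ⟨⟨w, i⟩, rfl⟩ := Quot.exists_rep z
  have ha := a.2
  have hb := b.2
  rw [← hza] at ha ⊢
  rw [← hzb] at hb ⊢
  by_cases hi : i = 0
  · subst hi
    exact (sphClassOrBase_of_wedge (Or.inr rfl)).trans (sphClassOrBase_of_wedge (Or.inr rfl)).symm
  · have hwa := (isSph_smash_mk_iff.1 ha).resolve_left hi
    have hwb := (isSph_smash_mk_iff.1 hb).resolve_left hi
    have hw : X.Rel n ⟨_, hwa⟩ ⟨_, hwb⟩ :=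
      ⟨w, fun j hj => (smash_d_mk_eq_pt_iff.1 (hz j hj)).resolve_right hi, rfl, rfl⟩
    exact (sphClassOrBase_of_isSph hwa i).trans ((congrArg (fun c => Quot.mk _ (c, i))
      (Quot.sound hw)).trans (sphClassOrBase_of_isSph hwb i).symm)

def smashMkClass (i : Fin (k + 1)) : X.picomb n → (X.smash k).picomb n :=
  Quot.lift (fun x => Quot.mk _ (x.smashMk i)) fun _ _ h => Quot.sound (h.smashMk i)

theorem smashMkClass_of_wedge {c : X.picomb n} {i : Fin (k + 1)} (h : c = X.picombPt n ∨ i = 0) :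
    smashMkClass i c = (X.smash k).picombPt n := by
  rcases h with rfl | rfl
  · exact (picombPt_eq_mk (Smash.mk_eq_base_iff.2 (Or.inl rfl))).symm
  · induction c using Quot.ind
    exact (picombPt_eq_mk (Smash.mk_eq_base_iff.2 (Or.inr rfl))).symm

def smashToPicomb (X : PSS) (k n : ℕ) :
    Smash (X.picomb n) (X.picombPt n) k → (X.smash k).picomb n :=
  Quot.lift (fun p => smashMkClass p.2 p.1) fun _ _ ⟨hu, hv⟩ =>
    (smashMkClass_of_wedge hu).trans (smashMkClass_of_wedge hv).symm

noncomputable def picombSmashEquiv (X : PSS) (k n : ℕ) :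
    (X.smash k).picomb n ≃ Smash (X.picomb n) (X.picombPt n) k where
  toFun := Quot.lift (fun a => smashSphClass X k n a.1) fun _ _ => smashSphClass_eq_of_rel
  invFun := smashToPicomb X k n
  left_inv := Quot.ind fun ⟨s, hs⟩ => by
    obtain ⟨⟨x, i⟩, rfl⟩ := Quot.exists_rep s
    show smashToPicomb X k n (sphClassOrBase X k n (x, i)) = _
    rcases isSph_smash_mk_iff.1 hs with rfl | hx
    · rw [sphClassOrBase_of_wedge (Or.inr rfl)]
      exact (smashMkClass_of_wedge (Or.inl rfl)).trans
        (picombPt_eq_mk (Smash.mk_eq_base_iff.2 (Or.inr rfl)))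
    · rw [sphClassOrBase_of_isSph hx]
      rfl
  right_inv := Quot.ind fun ⟨c, i⟩ => by
    induction c using Quot.ind with
    | mk x => exact sphClassOrBase_of_isSph x.2 i

end PSS

open Function

theorem Fin.eq_id_of_monotone_of_surjective {m : ℕ} {f : Fin m → Fin m} (hm : Monotone f)
    (hs : Surjective f) : f = id :=
  (StrictMono.range_inj (hm.strictMono_of_injective (Finite.injective_iff_surjective.2 hs))
    strictMono_id).1 (by rw [hs.range_eq, Set.range_id])

theorem Function.Surjective.comp_succAbove_of_eq {α : Type*} {q : ℕ} {g : Fin (q + 1) → α}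
    (hg : Surjective g) {i j : Fin (q + 1)} (hij : i ≠ j) (h : g i = g j) :
    Surjective (g ∘ j.succAbove) := by
  intro c
  obtain ⟨b, rfl⟩ := hg c
  by_cases hbj : b = j
  · obtain ⟨a, ha⟩ := Fin.exists_succAbove_eq hij
    exact ⟨a, by rw [comp_apply, ha, h, hbj]⟩
  · obtain ⟨a, ha⟩ := Fin.exists_succAbove_eq hbj
    exact ⟨a, by rw [comp_apply, ha]⟩

theorem coface_of_fin {q : ℕ} (j : Fin (q + 2)) : coface q j = j.succAbove := by
  unfold coface
  congr 1
  ext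
  exact min_eq_left (Nat.le_of_lt_succ j.isLt)

namespace SphSS

variable {n q : ℕ}

theorem d_some_eq_none_iff {j : ℕ}
    {f : {f : Fin (q + 2) → Fin (n + 1) // Monotone f ∧ Surjective f}} :
    (SphSS n).d q j (some f) = none ↔ ¬ Surjective (f.1 ∘ coface q j) := by
  simp only [SphSS, Option.bind_some]
  split_ifs with hs <;> simp [hs]

theorem d_some_ne_none_of_eq {f : {f : Fin (q + 2) → Fin (n + 1) // Monotone f ∧ Surjective f}}
    {i j : Fin (q + 2)} (hij : i ≠ j) (h : f.1 i = f.1 j) : (SphSS n).d q j (some f) ≠ none := by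
  refine fun hnone => d_some_eq_none_iff.1 hnone ?_
  rw [coface_of_fin]
  exact f.2.2.comp_succAbove_of_eq hij h

theorem eq_none_of_isSph {m : ℕ} (hmn : m ≠ n) {x : (SphSS n).obj m}
    (hx : (SphSS n).isSph m x) : x = none := by
  cases x with
  | none => rfl
  | some f =>
    exfalso
    rcases hmn.lt_or_gt with h | h
    · have := Fintype.card_le_of_surjective f.1 f.2.2
      simp only [Fintype.card_fin] at this
      omega
    · obtain ⟨p, rfl⟩ : ∃ p, m = p + 1 := ⟨m - 1, by omega⟩
      -- every face vanishes, so no two vertices of `f` may be identified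
      have hinj : Injective f.1 := fun i j hij =>
        by_contra fun hne => d_some_ne_none_of_eq hne hij (hx j (by omega))
      have := Fintype.card_le_of_injective f.1 hinj
      simp only [Fintype.card_fin] at this
      omega

def idSimplex (n : ℕ) : {f : Fin (n + 1) → Fin (n + 1) // Monotone f ∧ Surjective f} :=
  ⟨id, monotone_id, surjective_id⟩

theorem obj_self_eq_none_or_idSimplex (x : (SphSS n).obj n) :
    x = none ∨ x = some (idSimplex n) := by
  cases x with
  | none => exact Or.inl rfl
  | some f =>
    exact Or.inr (congrArg some (Subtype.ext (Fin.eq_id_of_monotone_of_surjective f.2.1 f.2.2)))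

theorem isSph_idSimplex : (SphSS n).isSph n (some (idSimplex n)) := by
  cases n with
  | zero => trivial
  | succ p =>
    intro j _
    refine d_some_eq_none_iff.2 fun hs => ?_
    obtain ⟨a, ha⟩ := hs ⟨min j (p + 1), by omega⟩
    exact Fin.succAbove_ne _ a ha

def idSph (n : ℕ) : (SphSS n).Sph n := ⟨some (idSimplex n), isSph_idSimplex⟩

theorem eq_of_rel {a b : (SphSS n).Sph n} (h : (SphSS n).Rel n a b) : a = b := by
  obtain ⟨z, hz, hza, hzb⟩ := h
  cases z with
  | none => exact Subtype.ext (hza.symm.trans hzb)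
  | some g =>
    -- `g : [n+1] → [n]` identifies two vertices `i < j`; the faces `∂_i`, `∂_j` survive, and
    -- the faces below `n` vanish, so `i = n`, `j = n + 1`, whence `∂_n z ≠ * ≠ ∂_{n+1} z`.
    obtain ⟨i, j, hij, hg⟩ := Fintype.exists_ne_map_eq_of_card_lt g.1 (by simp)
    wlog hlt : i < j generalizing i j
    · exact this j i hij.symm hg.symm (lt_of_le_of_ne (not_lt.1 hlt) hij.symm)
    have hi : n ≤ i := not_lt.1 fun hi => d_some_ne_none_of_eq hij.symm hg.symm (hz i hi)
    have hin : (i : ℕ) = n := by omega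
    have hjn : (j : ℕ) = n + 1 := by omega
    have ha := d_some_ne_none_of_eq hij.symm hg.symm
    have hb := d_some_ne_none_of_eq hij hg
    rw [hin, hza] at ha
    rw [hjn, hzb] at hb
    apply Subtype.ext
    rw [(obj_self_eq_none_or_idSimplex a.1).resolve_left ha,
      (obj_self_eq_none_or_idSimplex b.1).resolve_left hb]

theorem mk_idSph_ne_picombPt : (Quot.mk _ (idSph n) : (SphSS n).picomb n) ≠ (SphSS n).picombPt n :=
  fun h => Option.some_ne_none _ (congrArg Subtype.val (PSS.mk_injective_of_rel_eq
    (fun _ _ => eq_of_rel) h))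

theorem picomb_self_eq_or (c : (SphSS n).picomb n) :
    c = (SphSS n).picombPt n ∨ c = Quot.mk _ (idSph n) := by
  induction c using Quot.ind with
  | mk a =>
    exact (obj_self_eq_none_or_idSimplex a.1).imp (fun h => (PSS.picombPt_eq_mk h).symm)
      fun h => congrArg (Quot.mk _) (Subtype.ext h)

end SphSS

open PSS in
theorem stmt12_general (X : PSS) (n k : ℕ) :
    Nonempty ((X.smash k).picomb n ≃ Smash (X.picomb n) (X.picombPt n) k) ∧
    (∀ m, m ≠ n → (∀ a b : ((SphSS n).smash k).picomb m, a = b) ∧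
      Nonempty (((SphSS n).smash k).picomb m)) ∧
    Nonempty (((SphSS n).smash k).picomb n ≃ Fin (k + 1)) := by
  refine ⟨⟨picombSmashEquiv X k n⟩, fun m hm => ⟨?_, ⟨picombPt _ m⟩⟩,
    ⟨(picombSmashEquiv (SphSS n) k n).trans
      (Smash.equivFin _ SphSS.mk_idSph_ne_picombPt SphSS.picomb_self_eq_or)⟩⟩
  have : Subsingleton ((SphSS n).picomb m) :=
    subsingleton_picomb fun _ => SphSS.eq_none_of_isSph hm
  exact (picombSmashEquiv (SphSS n) k m).subsingleton.elim

/-- Homology with coefficients in the sphere `Γ`-set `𝔰` (the identity endofunctor):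
for any pointed simplicial set `X`, `H_n(X, 𝔰)(k₊) = π^comb_n(X ∧ k₊) = π^comb_n(X) ∧ k₊`;
in particular `H_m(Sⁿ, 𝔰) = {*}` for `m ≠ n`, and `H_n(Sⁿ, 𝔰) = 𝔰`, i.e.
`H_n(Sⁿ, 𝔰)(k₊) ≅ k₊`. -/
theorem stmt12 (X : PSS) (n k : ℕ) (hk : 0 < k) :
    Nonempty ((X.smash k).picomb n ≃ Smash (X.picomb n) (X.picombPt n) k) ∧
    (∀ m, m ≠ n → (∀ a b : ((SphSS n).smash k).picomb m, a = b) ∧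
      Nonempty (((SphSS n).smash k).picomb m)) ∧
    Nonempty (((SphSS n).smash k).picomb n ≃ Fin (k + 1)) :=
  stmt12_general X n k
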